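/- arXiv:2308.13478 — 2 statements merged into one kernel-verified Lean document; each statement's English description precedes it below -/
import Mathlib

section
/- Suppose κ^{<κ} = κ, κ > ℶ_ω, 𝔱(κ) > κ⁺, and φ: 2^{<κ⁺} → [κ]^κ is an injective map such that for each α < κ⁺ and f ∈ 2^α the family {φ(f↾β) : β < α} is reversely well-ordered by ⊆* and satisfies the strong intersection property, and φ(f⌢0) ∩ φ(f⌢1) = ∅ for every f ∈ 2^{<κ⁺}. If b ∈ 2^{κ⁺} and A ∈ [κ]^κ is a pseudo-intersection of 𝒯_b = {φ(b↾α) : α < κ⁺}, then b is definable from A, φ and the tree 2^{<κ⁺}: namely b = ⋃{φ⁻¹(B) : A ⊆* B, B ∈ ran(φ)}. Consequently, if b is a cofinal branch of (2^{<κ⁺},⊆) not in a model M containing φ and all elements of [κ]^κ, then 𝒯_b has no pseudo-intersection in M, so 𝒯_b is a tower of size κ⁺. -/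
/- Statement 15: the combinatorial core of Lemma 4.6 of Honzik–Stejskalová,
using the Sakai–Shelah map. -/

open Cardinal Set

namespace Paper

/-! ### Forcing notions and their combinatorial properties -/

section Forcing
variable {P : Type} [Preorder P]

/-- Two conditions are compatible if they have a common extension. -/
def Compat (p q : P) : Prop := ∃ r, r ≤ p ∧ r ≤ q

/-- An antichain in the forcing sense: pairwise incompatible conditions. -/
def StrongAntichain (A : Set P) : Prop := A.Pairwise fun p q => ¬ Compat p q

/-- The `κ`-chain condition: every antichain has size `< κ`. -/
def CC (κ : Cardinal.{0}) (P : Type) [Preorder P] : Prop :=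
  ∀ A : Set P, StrongAntichain A → #A < κ

/-- `κ`-Knaster: among any `κ` many conditions there are `κ` many pairwise compatible ones. -/
def Knaster (κ : Cardinal.{0}) (P : Type) [Preorder P] : Prop :=
  ∀ A : Set P, #A = κ → ∃ B ⊆ A, #B = κ ∧ B.Pairwise Compat

/-- Productively `κ`-cc: the product `P × P` (with the componentwise order) is `κ`-cc. -/
def ProductivelyCC (κ : Cardinal.{0}) (P : Type) [Preorder P] : Prop := CC κ (P × P)

def DenseBelow (D : Set P) : Prop := ∀ p : P, ∃ q ∈ D, q ≤ p

def OpenDense (D : Set P) : Prop := DenseBelow D ∧ ∀ q ∈ D, ∀ r, r ≤ q → r ∈ D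

/-- `c`-distributivity: the intersection of fewer than `c` many open dense sets is dense
(so `κ⁺`-distributive = `Distributive (Order.succ κ)`, i.e. no new `κ`-sequences). -/
def Distributive (c : Cardinal.{0}) (P : Type) [Preorder P] : Prop :=
  ∀ (ι : Type) (D : ι → Set P), #ι < c → (∀ i, OpenDense (D i)) → DenseBelow (⋂ i, D i)

/-- `κ`-directed closed: every directed set of fewer than `κ` conditions has a lower bound. -/
def DirectedClosed (κ : Cardinal.{0}) (P : Type) [Preorder P] : Prop :=
  ∀ D : Set P, D.Nonempty → (∀ p ∈ D, ∀ q ∈ D, ∃ r ∈ D, r ≤ p ∧ r ≤ q) → #D < κ →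
    ∃ r, ∀ p ∈ D, r ≤ p

/-- A filter on `P` generic over the (ground) universe: it meets every dense set. -/
def IsGenericFilter (G : Set P) : Prop :=
  G.Nonempty ∧ (∀ p ∈ G, ∀ q, p ≤ q → q ∈ G) ∧
    (∀ p ∈ G, ∀ q ∈ G, ∃ r ∈ G, r ≤ p ∧ r ≤ q) ∧
    ∀ D : Set P, DenseBelow D → (G ∩ D).Nonempty

/-- `P ⊩ φ`: every generic extension (i.e. every generic filter) satisfies `φ`,
where `φ` is a sentence about the extension (expressed in the language of the
extension, which we identify with the ambient language). -/
def Forces (P : Type) [Preorder P] (φ : Prop) : Prop :=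
  ∀ G : Set P, IsGenericFilter G → φ

/-- Evaluation of a name `τ` for a subset of the ground-model set `A` by the filter `G`. -/
def evalName {A : Type} (G : Set P) (τ : Set (P × A)) : Set A :=
  {a | ∃ p ∈ G, (p, a) ∈ τ}

/-- `P` preserves the cardinal `κ`: no generic filter evaluates a name to a
surjection from a smaller ordinal onto `κ`. -/
def PreservesCardinal (P : Type) [Preorder P] (κ : Cardinal.{0}) : Prop :=
  ∀ G : Set P, IsGenericFilter G →
    ∀ β : Ordinal.{0}, β < κ.ord →
      ∀ τ : Set (P × (β.ToType × κ.ord.ToType)),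
        ¬ ((∀ x, ∃! y, (x, y) ∈ evalName G τ) ∧ ∀ y, ∃ x, (x, y) ∈ evalName G τ)

end Forcing

/-- The underlying type of the cardinal `κ`. -/
abbrev κT (κ : Cardinal.{0}) : Type := κ.ord.ToType

/-- The underlying type of `κ⁺`. -/
abbrev KPT (κ : Cardinal.{0}) : Type := (Order.succ κ).ord.ToType

/-! ### Generalized cardinal invariants at `κ` -/

section Invariants
variable (κ : Cardinal.{0})

/-- Almost-inclusion: `A ⊆* B` iff `|A \ B| < κ`. -/
def SubsetStar (A B : Set (κT κ)) : Prop := #(A \ B : Set (κT κ)) < κ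

/-- The strong intersection property. -/
def SIP (𝒯 : Set (Set (κT κ))) : Prop :=
  ∀ X ⊆ 𝒯, X.Nonempty → #X < κ → #(⋂₀ X : Set (κT κ)) = κ

def IsPseudoIntersection (A : Set (κT κ)) (𝒯 : Set (Set (κT κ))) : Prop :=
  #A = κ ∧ ∀ T ∈ 𝒯, SubsetStar κ A T

/-- A (⊆*-decreasing enumeration of a) tower on `κ`: a ⊆*-reversely well-ordered family
in `[κ]^κ` with the strong intersection property and no pseudo-intersection. -/
def IsTowerSeq {γ : Ordinal.{0}} (T : γ.ToType → Set (κT κ)) : Prop :=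
  (∀ i, #(T i) = κ) ∧ (∀ i j : γ.ToType, i < j → SubsetStar κ (T j) (T i)) ∧
    SIP κ (Set.range T) ∧ ¬ ∃ A, IsPseudoIntersection κ A (Set.range T)

/-- The tower number `𝔱(κ)`. -/
noncomputable def towerNumber : Cardinal.{0} :=
  sInf {c | ∃ (γ : Ordinal.{0}) (T : γ.ToType → Set (κT κ)), IsTowerSeq κ T ∧ c = #(Set.range T)}

/-- The pseudo-intersection number `𝔭(κ)`. -/
noncomputable def pseudoIntersectionNumber : Cardinal.{0} :=
  sInf {c | ∃ F : Set (Set (κT κ)), (∀ A ∈ F, #A = κ) ∧ SIP κ F ∧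
    (¬ ∃ A, IsPseudoIntersection κ A F) ∧ c = #F}

/-- Eventual domination. -/
def LeStar (f g : κT κ → κT κ) : Prop := #{x | g x < f x} < κ

/-- The bounding number `𝔟(κ)`. -/
noncomputable def boundingNumber : Cardinal.{0} :=
  sInf {c | ∃ F : Set (κT κ → κT κ), (¬ ∃ g, ∀ f ∈ F, LeStar κ f g) ∧ c = #F}

/-- The dominating number `𝔡(κ)`. -/
noncomputable def dominatingNumber : Cardinal.{0} :=
  sInf {c | ∃ F : Set (κT κ → κT κ), (∀ f, ∃ g ∈ F, LeStar κ f g) ∧ c = #F}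

def Splits (S A : Set (κT κ)) : Prop :=
  #(A ∩ S : Set (κT κ)) = κ ∧ #(A \ S : Set (κT κ)) = κ

/-- The splitting number `𝔰(κ)`. -/
noncomputable def splittingNumber : Cardinal.{0} :=
  sInf {c | ∃ F : Set (Set (κT κ)),
    (∀ A : Set (κT κ), #A = κ → ∃ S ∈ F, Splits κ S A) ∧ c = #F}

/-- The reaping number `𝔯(κ)`. -/
noncomputable def reapingNumber : Cardinal.{0} :=
  sInf {c | ∃ F : Set (Set (κT κ)), (∀ A ∈ F, #A = κ) ∧
    (∀ S : Set (κT κ), ∃ A ∈ F, ¬ Splits κ S A) ∧ c = #F}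

def AlmostDisjointFamily (F : Set (Set (κT κ))) : Prop :=
  (∀ A ∈ F, #A = κ) ∧ F.Pairwise fun A B => #(A ∩ B : Set (κT κ)) < κ

/-- The almost-disjointness number `𝔞(κ)`. -/
noncomputable def madNumber : Cardinal.{0} :=
  sInf {c | ∃ F : Set (Set (κT κ)), AlmostDisjointFamily κ F ∧ κ ≤ #F ∧
    (∀ B : Set (κT κ), #B = κ → ∃ A ∈ F, ¬ #(A ∩ B : Set (κT κ)) < κ) ∧ c = #F}

/-- `B` is a base of a uniform ultrafilter on `κ`. -/
def IsUniformUltrafilterBase (B : Set (Set (κT κ))) : Prop :=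
  ∃ U : Ultrafilter (κT κ), (∀ A ∈ U, #(A : Set (κT κ)) = κ) ∧ (∀ b ∈ B, b ∈ U) ∧
    ∀ A ∈ U, ∃ b ∈ B, b ⊆ A

/-- The ultrafilter number `𝔲(κ)`. -/
noncomputable def ultrafilterNumber : Cardinal.{0} :=
  sInf {c | ∃ B, IsUniformUltrafilterBase κ B ∧ c = #B}

end Invariants

/-- A node of the tree `2^{<κ⁺}`: a partial function `κ⁺ → 2` whose domain is a proper
initial segment of `κ⁺`. -/
def Node (κ : Cardinal.{0}) : Type :=
  {f : KPT κ → Option Bool // ∃ x : KPT κ, ∀ y, (f y).isSome ↔ y < x}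

/-- The restriction `b ↾ x` of a branch `b : κ⁺ → 2` to the initial segment below `x`. -/
noncomputable def resNode (κ : Cardinal.{0}) (b : KPT κ → Bool) (x : KPT κ) : Node κ :=
  ⟨fun y => if y < x then some (b y) else none,
    ⟨x, fun y => by by_cases h : y < x <;> simp [h]⟩⟩


/-! ### Auxiliary lemmas -/

lemma exists_succ' (κ : Cardinal.{0}) (hκ : ℵ₀ ≤ κ) (y : KPT κ) :
    ∃ z : KPT κ, ∀ w, w < z ↔ w ≤ y := by
  have hlim : Order.IsSuccLimit ((Order.succ κ).ord) :=
    Cardinal.isSuccLimit_ord (hκ.trans (Order.le_succ κ))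
  set o := (Order.succ κ).ord
  set e := Ordinal.ToType.mk (o := o)
  have hβ : (e.symm y).1 + 1 < o := hlim.succ_lt (e.symm y).2
  refine ⟨e ⟨_, Set.mem_Iio.2 hβ⟩, fun w => ?_⟩
  constructor
  · intro hw
    have : e.symm w < e.symm (e ⟨_, Set.mem_Iio.2 hβ⟩) := by exact_mod_cast e.symm.lt_iff_lt.2 hw
    rw [e.symm_apply_apply] at this
    have : (e.symm w).1 < (e.symm y).1 + 1 := this
    have h2 : (e.symm w).1 ≤ (e.symm y).1 := (Order.lt_succ_iff (a := (e.symm w).1)).mp this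
    have : e.symm w ≤ e.symm y := h2
    simpa using e.symm.le_iff_le.1 this
  · intro hw
    have : e.symm w ≤ e.symm y := e.symm.le_iff_le.2 hw
    have h2 : (e.symm w).1 < (e.symm y).1 + 1 := (Order.lt_succ_iff (a := (e.symm w).1)).mpr this
    have h3 : e.symm w < e.symm (e ⟨_, Set.mem_Iio.2 hβ⟩) := by
      rw [e.symm_apply_apply]; exact h2
    simpa using e.symm.lt_iff_lt.1 h3

lemma exists_bound' (κ : Cardinal.{0}) (hκ : ℵ₀ ≤ κ) (ι : Type) (g : ι → KPT κ)
    (hι : #ι < Order.succ κ) : ∃ x : KPT κ, ∀ i, g i < x := by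
  have hlim : Order.IsSuccLimit ((Order.succ κ).ord) :=
    Cardinal.isSuccLimit_ord (hκ.trans (Order.le_succ κ))
  set o := (Order.succ κ).ord
  set e := Ordinal.ToType.mk (o := o)
  have hreg : (Order.succ κ).IsRegular := Cardinal.isRegular_succ hκ
  have hsup : (⨆ i, (e.symm (g i)).1) < o :=
    Cardinal.iSup_lt_ord_of_isRegular hreg hι fun i => (e.symm (g i)).2
  have hsup1 : (⨆ i, (e.symm (g i)).1) + 1 < o := hlim.succ_lt hsup
  refine ⟨e ⟨_, Set.mem_Iio.2 hsup1⟩, fun i => ?_⟩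
  have h1 : (e.symm (g i)).1 ≤ ⨆ i, (e.symm (g i)).1 := Ordinal.le_iSup _ i
  have h3 : e.symm (g i) < e.symm (e ⟨_, Set.mem_Iio.2 hsup1⟩) := by
    rw [e.symm_apply_apply]
    exact Subtype.mk_lt_mk.2 (h1.trans_lt (Order.lt_succ _))
  simpa using e.symm.lt_iff_lt.1 h3

/-- the key combinatorial step in Lemma 4.6, via the Sakai–Shelah map:
suppose `κ^{<κ} = κ`, `κ > ℶ_ω`, `𝔱(κ) > κ⁺` and `φ : 2^{<κ⁺} → [κ]^κ` is injective,
with `⊆*`-decreasing images with SIP along every branch, and `φ(f⌢0) ∩ φ(f⌢1) = ∅`.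
If `b ∈ 2^{κ⁺}` and `A ∈ [κ]^κ` is a pseudo-intersection of
`𝒯_b = {φ(b↾α) : α < κ⁺}`, then `b` is definable from `A` and `φ`
(its restrictions are exactly the nodes `n` with `A ⊆* φ(n)`).  Consequently, if `b`
is a cofinal branch not belonging to a model `M` containing `φ` and all elements of
`[κ]^κ`, then `𝒯_b` has no pseudo-intersection, so `𝒯_b` is a tower of size `κ⁺`. -/
theorem pseudo_intersection_decodes_branch
    (κ : Cardinal.{0}) (hκ1 : κ ^< κ = κ) (hκ2 : Cardinal.beth Ordinal.omega0 < κ)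
    (ht : Order.succ κ < towerNumber κ)
    (φ : Node κ → Set (κT κ)) (hinj : Function.Injective φ)
    -- along every branch the images are reversely well-ordered by `⊆*` ...
    (hdec : ∀ (b : KPT κ → Bool) (y z : KPT κ), y < z →
      SubsetStar κ (φ (resNode κ b z)) (φ (resNode κ b y)))
    -- ... and satisfy the strong intersection property
    (hsip : ∀ (b : KPT κ → Bool) (x : KPT κ),
      SIP κ {A | ∃ y < x, A = φ (resNode κ b y)})
    -- `φ(f⌢0) ∩ φ(f⌢1) = ∅`
    (hsplit : ∀ (n₀ n₁ : Node κ) (x : KPT κ),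
      (∀ y, (n₀.1 y).isSome ↔ y ≤ x) → (∀ y, (n₁.1 y).isSome ↔ y ≤ x) →
      (∀ y, y < x → n₀.1 y = n₁.1 y) →
      n₀.1 x = some false → n₁.1 x = some true →
      Disjoint (φ n₀) (φ n₁)) :
    -- (1) a pseudo-intersection of `𝒯_b` decodes the branch `b`:
    -- `b = ⋃ {φ⁻¹(B) : A ⊆* B, B ∈ ran(φ)}`
    (∀ (b : KPT κ → Bool) (A : Set (κT κ)),
      IsPseudoIntersection κ A (Set.range fun x => φ (resNode κ b x)) →
      {n : Node κ | SubsetStar κ A (φ n)} = Set.range (resNode κ b)) ∧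
    -- (2) hence for any model `M` (represented by its set `MB` of branches, which
    -- contains every branch decodable from an element of `[κ]^κ`), a branch `b ∉ M`
    -- gives a tower `𝒯_b` of size `κ⁺` with no pseudo-intersection
    ∀ MB : Set (KPT κ → Bool),
      (∀ A : Set (κT κ), #A = κ → ∀ b : KPT κ → Bool,
        {n : Node κ | SubsetStar κ A (φ n)} = Set.range (resNode κ b) → b ∈ MB) →
      ∀ b : KPT κ → Bool, b ∉ MB →
        (¬ ∃ A, IsPseudoIntersection κ A (Set.range fun x => φ (resNode κ b x))) ∧
        IsTowerSeq κ (fun x : KPT κ => φ (resNode κ b x)) ∧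
        #(Set.range fun x : KPT κ => φ (resNode κ b x)) = Order.succ κ := by
  classical
  have hκ0 : ℵ₀ ≤ κ := (Cardinal.aleph0_le_beth _).trans hκ2.le
  have htrans : ∀ {A B C : Set (κT κ)}, SubsetStar κ A B → SubsetStar κ B C →
      SubsetStar κ A C := by
    intro A B C h1 h2
    have hsub : (A \ C : Set (κT κ)) ⊆ (A \ B) ∪ (B \ C) := by
      intro a ha
      by_cases hb : a ∈ B
      · exact Or.inr ⟨hb, ha.2⟩
      · exact Or.inl ⟨ha.1, hb⟩
    calc #(A \ C : Set (κT κ)) ≤ #(((A \ B) ∪ (B \ C) : Set (κT κ))) :=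
          Cardinal.mk_le_mk_of_subset hsub
      _ ≤ #(A \ B : Set (κT κ)) + #(B \ C : Set (κT κ)) := Cardinal.mk_union_le _ _
      _ < κ := Cardinal.add_lt_of_lt hκ0 h1 h2
  have hisSome : ∀ (b : KPT κ → Bool) (x y : KPT κ),
      ((resNode κ b x).1 y).isSome ↔ y < x := by
    intro b x y; by_cases h : y < x <;> simp [resNode, h]
  have hval : ∀ (b : KPT κ → Bool) (x y : KPT κ), y < x →
      (resNode κ b x).1 y = some (b y) := by
    intro b x y h; simp [resNode, h]
  have key : ∀ (b : KPT κ → Bool) (A : Set (κT κ)),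
      IsPseudoIntersection κ A (Set.range fun x => φ (resNode κ b x)) →
      {n : Node κ | SubsetStar κ A (φ n)} = Set.range (resNode κ b) := by
    intro b A hA
    apply Set.eq_of_subset_of_subset
    · intro n hn
      by_contra hmem
      obtain ⟨xn, hxn⟩ := n.2
      have hdis : ∃ y, y < xn ∧ n.1 y ≠ some (b y) := by
        by_contra hcon
        push_neg at hcon
        apply hmem
        refine ⟨xn, ?_⟩
        apply Subtype.ext; funext z
        by_cases hz : z < xn
        · rw [hval b xn z hz]
          exact (hcon z hz).symm
        · have h1 : (n.1 z) = none := Option.not_isSome_iff_eq_none.mp (by rw [hxn]; exact hz)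
          have h2 : ((resNode κ b xn).1 z) = none :=
            Option.not_isSome_iff_eq_none.mp (by rw [hisSome]; exact hz)
          rw [h1, h2]
      set S : Set (KPT κ) := {y | y < xn ∧ n.1 y ≠ some (b y)} with hS
      have hSne : S.Nonempty := by
        obtain ⟨y, hy1, hy2⟩ := hdis; exact ⟨y, hy1, hy2⟩
      set y := wellFounded_lt.min S hSne with hydef
      have hyS : y ∈ S := wellFounded_lt.min_mem S hSne
      obtain ⟨hyx, hyne⟩ := hyS
      have hymin : ∀ z, z < y → n.1 z = some (b z) := by
        intro z hz
        by_contra hne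
        exact wellFounded_lt.not_lt_min S ⟨hz.trans hyx, hne⟩ hz
      set b' : KPT κ → Bool := fun z => (n.1 z).getD (b z) with hb'
      have hb'z : ∀ z, b' z = (n.1 z).getD (b z) := fun _ => rfl
      have hb'res : resNode κ b' xn = n := by
        apply Subtype.ext; funext z
        by_cases hz : z < xn
        · obtain ⟨c, hc⟩ := Option.isSome_iff_exists.mp ((hxn z).2 hz)
          rw [hval b' xn z hz, hb'z, hc]
          rfl
        · have h1 : (n.1 z) = none := Option.not_isSome_iff_eq_none.mp (by rw [hxn]; exact hz)
          have h2 : ((resNode κ b' xn).1 z) = none :=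
            Option.not_isSome_iff_eq_none.mp (by rw [hisSome]; exact hz)
          rw [h1, h2]
      have hyval : n.1 y = some (b' y) := by
        obtain ⟨c, hc⟩ := Option.isSome_iff_exists.mp ((hxn y).2 hyx)
        rw [hc, hb'z, hc]
        rfl
      have hb'y : b' y ≠ b y := fun h => hyne (by rw [hyval, h])
      have hb'ylt : ∀ z, z < y → b' z = b z := by
        intro z hz
        rw [hb'z, hymin z hz]
        rfl
      obtain ⟨s, hs⟩ := exists_succ' κ hκ0 y
      have hys : y < s := (hs y).2 le_rfl
      have hsxn : s ≤ xn := by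
        by_contra h
        push_neg at h
        exact absurd ((hs xn).1 h) (not_le.2 hyx)
      have hagree : ∀ w, w < y → (resNode κ b s).1 w = (resNode κ b' s).1 w := by
        intro w hw
        rw [hval _ _ _ ((hs w).2 hw.le), hval _ _ _ ((hs w).2 hw.le), hb'ylt w hw]
      have hmy : (resNode κ b s).1 y = some (b y) := hval _ _ _ hys
      have hm'y : (resNode κ b' s).1 y = some (b' y) := hval _ _ _ hys
      have hdisj : Disjoint (φ (resNode κ b s)) (φ (resNode κ b' s)) := by
        cases hby : b y
        · have hb't : b' y = true := by
            cases h' : b' y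
            · exact absurd (h'.trans hby.symm) hb'y
            · rfl
          exact hsplit _ _ y (fun w => by rw [hisSome]; exact hs w)
            (fun w => by rw [hisSome]; exact hs w) hagree
            (by rw [hmy, hby]) (by rw [hm'y, hb't])
        · have hb'f : b' y = false := by
            cases h' : b' y
            · rfl
            · exact absurd (h'.trans hby.symm) hb'y
          exact (hsplit _ _ y (fun w => by rw [hisSome]; exact hs w)
            (fun w => by rw [hisSome]; exact hs w) (fun w hw => (hagree w hw).symm)
            (by rw [hm'y, hb'f]) (by rw [hmy, hby])).symm
      have h1 : SubsetStar κ A (φ (resNode κ b s)) := hA.2 _ ⟨s, rfl⟩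
      have h2 : SubsetStar κ A (φ (resNode κ b' s)) := by
        rcases lt_or_eq_of_le hsxn with h | h
        · exact htrans (show SubsetStar κ A (φ (resNode κ b' xn)) by
            rw [hb'res]; exact hn) (hdec b' s xn h)
        · rw [h, hb'res]; exact hn
      have hsub : A ⊆ (A \ φ (resNode κ b s)) ∪ (A \ φ (resNode κ b' s)) := by
        intro a ha
        by_cases hB : a ∈ φ (resNode κ b s)
        · exact Or.inr ⟨ha, fun hC => (Set.disjoint_left.mp hdisj hB) hC⟩
        · exact Or.inl ⟨ha, hB⟩
      have : κ < κ := by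
        calc κ = #A := hA.1.symm
          _ ≤ #(((A \ φ (resNode κ b s)) ∪ (A \ φ (resNode κ b' s)) : Set (κT κ))) :=
            Cardinal.mk_le_mk_of_subset hsub
          _ ≤ #(A \ φ (resNode κ b s) : Set (κT κ)) +
              #(A \ φ (resNode κ b' s) : Set (κT κ)) := Cardinal.mk_union_le _ _
          _ < κ := Cardinal.add_lt_of_lt hκ0 h1 h2
      exact absurd this (lt_irrefl κ)
    · rintro _ ⟨x, rfl⟩
      exact hA.2 _ ⟨x, rfl⟩
  have hresinj : ∀ b : KPT κ → Bool, Function.Injective (resNode κ b) := by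
    intro b x x' h
    apply eq_of_forall_lt_iff
    intro z
    rw [← hisSome b x z, ← hisSome b x' z, h]
  refine ⟨key, ?_⟩
  intro MB hM b hb
  have noPI : ¬ ∃ A, IsPseudoIntersection κ A (Set.range fun x => φ (resNode κ b x)) := by
    rintro ⟨A, hA⟩
    exact hb (hM A hA.1 b (key b A hA))
  refine ⟨noPI, ⟨?_, fun y z h => hdec b y z h, ?_, noPI⟩, ?_⟩
  · intro x
    obtain ⟨s, hs⟩ := exists_succ' κ hκ0 x
    have hxs : x < s := (hs x).2 le_rfl
    have := hsip b s {φ (resNode κ b x)}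
      (by intro B hB
          rw [Set.mem_singleton_iff] at hB
          exact ⟨x, hxs, hB⟩)
      ⟨_, rfl⟩
      (by rw [Cardinal.mk_singleton]; exact lt_of_lt_of_le Cardinal.one_lt_aleph0 hκ0)
    rwa [Set.sInter_singleton] at this
  · intro X hX hXne hXlt
    choose g hg using fun a : X => hX a.2
    obtain ⟨x, hx⟩ := exists_bound' κ hκ0 X g (hXlt.trans (Order.lt_succ κ))
    apply hsip b x X ?_ hXne hXlt
    intro B hB
    exact ⟨g ⟨B, hB⟩, hx _, (hg ⟨B, hB⟩).symm⟩
  · rw [Cardinal.mk_range_eq (fun x => φ (resNode κ b x)) (fun x x' h => hresinj b (hinj h)),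
      Cardinal.mk_toType, Cardinal.card_ord]


end Paper
end

section
/- Let κ ≤ λ be infinite cardinals with κ⁺ regular, let α be an ordinal of cofinality κ⁺, and let ⟨x_i : i < κ⁺⟩ be an increasing continuous sequence of subsets of α each of size < κ⁺ whose union is α. Then a set s ⊆ 𝒫_{κ⁺}(α) is stationary in 𝒫_{κ⁺}(α) if and only if {i < κ⁺ : x_i ∈ s} is stationary in κ⁺. Consequently, any forcing preserving stationary subsets of κ⁺ preserves stationary subsets of 𝒫_{κ⁺}(α). -/
/- Statement 18: the key step in the proof of Theorem 2.17 of Honzik–Stejskalová. -/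

open Cardinal Set

namespace Paper

/-! ### Clubs, stationary sets and stationary reflection -/

def ClubBelow (C : Set Ordinal.{0}) (θ : Ordinal.{0}) : Prop :=
  C ⊆ Set.Iio θ ∧ (∀ β < θ, ∃ γ ∈ C, β ≤ γ) ∧
    ∀ β < θ, β ≠ 0 → (∀ δ < β, ∃ γ ∈ C, δ < γ ∧ γ < β) → β ∈ C

def StationaryBelow (S : Set Ordinal.{0}) (θ : Ordinal.{0}) : Prop :=
  S ⊆ Set.Iio θ ∧ ∀ C, ClubBelow C θ → (S ∩ C).Nonempty

/-- Stationary reflection `SR(κ⁺⁺)`: every stationary subset of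
`κ⁺⁺ ∩ cof(<κ⁺)` reflects at an ordinal of cofinality `κ⁺`. -/
def SR (κ : Cardinal.{0}) : Prop :=
  ∀ S : Set Ordinal.{0},
    S ⊆ {β | β < (Order.succ (Order.succ κ)).ord ∧ β.cof < Order.succ κ} →
    StationaryBelow S (Order.succ (Order.succ κ)).ord →
    ∃ α < (Order.succ (Order.succ κ)).ord, α.cof = Order.succ κ ∧
      StationaryBelow (S ∩ Set.Iio α) α

/-! ### Stationarity in `𝒫_{κ⁺}(α)` and disjoint stationary sequences -/

/-- `x` is a subset of `α` of size `< κp`. -/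
def SmallSub (κp : Cardinal.{0}) (α : Ordinal.{0}) (x : Set Ordinal.{0}) : Prop :=
  x ⊆ Set.Iio α ∧ #x < Cardinal.lift.{1,0} κp

/-- A club in `𝒫_{κp}(α)`: unbounded and closed under unions of small chains. -/
def ClubInP (κp : Cardinal.{0}) (α : Ordinal.{0}) (C : Set (Set Ordinal.{0})) : Prop :=
  (∀ y ∈ C, SmallSub κp α y) ∧ (∀ x, SmallSub κp α x → ∃ y ∈ C, x ⊆ y) ∧
    ∀ D ⊆ C, D.Nonempty → IsChain (· ⊆ ·) D → #D < Cardinal.lift.{1,0} κp → ⋃₀ D ∈ C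

/-- A stationary subset of `𝒫_{κp}(α)`. -/
def StationaryInP (κp : Cardinal.{0}) (α : Ordinal.{0}) (s : Set (Set Ordinal.{0})) : Prop :=
  (∀ x ∈ s, SmallSub κp α x) ∧ ∀ C, ClubInP κp α C → (s ∩ C).Nonempty

/-- `⟨s α : α ∈ S⟩` is a disjoint stationary sequence on `κ⁺⁺`. -/
def IsDSS (κ : Cardinal.{0}) (S : Set Ordinal.{0})
    (s : Ordinal.{0} → Set (Set Ordinal.{0})) : Prop :=
  S ⊆ {α | α < (Order.succ (Order.succ κ)).ord ∧ α.cof = Order.succ κ} ∧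
    StationaryBelow S (Order.succ (Order.succ κ)).ord ∧
    (∀ α ∈ S, StationaryInP (Order.succ κ) α (s α)) ∧
    ∀ α ∈ S, ∀ β ∈ S, α ≠ β → Disjoint (s α) (s β)

/-- The disjoint stationary sequence property `DSS(κ⁺⁺)`. -/
def DSS (κ : Cardinal.{0}) : Prop := ∃ S s, IsDSS κ S s

/-! ### Clubs and stationary sets in a linear order -/

section LinClub
variable {X : Type} [LinearOrder X]

def ClubT (C : Set X) : Prop :=
  (∀ x : X, ∃ c ∈ C, x ≤ c) ∧
    ∀ x : X, (∃ y, y < x) → (∀ y, y < x → ∃ c ∈ C, y < c ∧ c < x) → x ∈ C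

def StatT (S : Set X) : Prop := ∀ C : Set X, ClubT C → (S ∩ C).Nonempty

end LinClub

section KptHelpers
variable {κ : Cardinal.{0}}

noncomputable def kptIso (κ : Cardinal.{0}) : Set.Iio (Order.succ κ).ord ≃o KPT κ :=
  Ordinal.ToType.mk

variable {κ : Cardinal.{0}}

lemma kpt_nonempty (hreg : (Order.succ κ).IsRegular) : Nonempty (KPT κ) := by
  rw [Ordinal.nonempty_toType_iff]
  exact hreg.ord_pos.ne'

lemma kpt_sup (hreg : (Order.succ κ).IsRegular) (I : Set (KPT κ)) (hne : I.Nonempty)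
    (hI : #I < Order.succ κ) :
    ∃ b : KPT κ, (∀ i ∈ I, i ≤ b) ∧ (b ∈ I ∨ ∀ j, j < b → ∃ i ∈ I, j < i) := by
  have : Nonempty I := hne.to_subtype
  set e := kptIso κ with he
  set f : I → Ordinal := fun i => ((e.symm i.1 : Set.Iio _) : Ordinal) with hf
  have hflt : ∀ i, f i < (Order.succ κ).ord := fun i => (e.symm i.1).2
  have hσ : (⨆ i, f i) < (Order.succ κ).ord := by
    apply Ordinal.iSup_lt_ord _ hflt
    rwa [hreg.cof_eq]
  refine ⟨e ⟨_, hσ⟩, ?_, ?_⟩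
  · intro i hi
    have h1 : f ⟨i, hi⟩ ≤ ⨆ i, f i := le_ciSup (Ordinal.bddAbove_range f) _
    have h2 : e.symm i ≤ ⟨_, hσ⟩ := h1
    calc i = e (e.symm i) := (e.apply_symm_apply i).symm
    _ ≤ e ⟨_, hσ⟩ := e.monotone h2
  · by_cases hb : e ⟨_, hσ⟩ ∈ I
    · exact Or.inl hb
    · refine Or.inr fun j hj => ?_
      have h2 : e.symm j < e.symm (e ⟨_, hσ⟩) := e.symm.strictMono hj
      rw [e.symm_apply_apply] at h2
      have h3 : ((e.symm j : Set.Iio _) : Ordinal) < ⨆ i, f i := h2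
      obtain ⟨i, hi⟩ := (lt_ciSup_iff (Ordinal.bddAbove_range f)).1 h3
      refine ⟨i.1, i.2, ?_⟩
      have h4 : e.symm j < e.symm i.1 := Subtype.coe_lt_coe.1 hi
      have := e.strictMono h4
      rwa [e.apply_symm_apply, e.apply_symm_apply] at this

lemma kpt_bdd (hreg : (Order.succ κ).IsRegular) (I : Set (KPT κ))
    (hI : #I < Order.succ κ) : ∃ b : KPT κ, ∀ i ∈ I, i ≤ b := by
  rcases I.eq_empty_or_nonempty with rfl | hne
  · exact ⟨(kpt_nonempty hreg).some, by simp⟩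
  · obtain ⟨b, hb, -⟩ := kpt_sup hreg I hne hI
    exact ⟨b, hb⟩

lemma kpt_no_max (hreg : (Order.succ κ).IsRegular) (i : KPT κ) : ∃ j, i < j := by
  have : NoMaxOrder (KPT κ) := Cardinal.noMaxOrder hreg.aleph0_le
  exact exists_gt i

lemma kpt_card_Iio (i : KPT κ) : #(Set.Iio i) < Order.succ κ := by
  set e := kptIso κ
  set o : Ordinal := (e.symm i).1 with ho
  have hinj : Function.Injective
      (fun j : Set.Iio i => (⟨(e.symm j.1).1, by
        exact e.symm.strictMono j.2⟩ : Set.Iio o)) := by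
    intro a b hab
    have h0 : (e.symm a.1).1 = (e.symm b.1).1 := by have h := congrArg Subtype.val hab; exact h
    have : (e.symm a.1) = e.symm b.1 := Subtype.ext h0
    have := e.symm.injective this
    exact Subtype.ext this
  have h1 : Cardinal.lift.{1} #(Set.Iio i) ≤ Cardinal.lift.{0} #(Set.Iio o) :=
    Cardinal.lift_mk_le'.2 ⟨⟨_, hinj⟩⟩
  rw [Ordinal.mk_Iio_ordinal, Cardinal.lift_id'] at h1
  have h2 : #(Set.Iio i) ≤ o.card := Cardinal.lift_le.1 h1
  exact h2.trans_lt (Cardinal.lt_ord.1 (e.symm i).2)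

end KptHelpers

/-- the key step in the proof of Theorem 2.17: let `κ ≤ λ` be
infinite cardinals with `κ⁺` regular, let `α` be an ordinal of cofinality `κ⁺`, and let
`⟨x_i : i < κ⁺⟩` be an increasing continuous sequence of subsets of `α` of size `< κ⁺`
with union `α`.  Then `s ⊆ 𝒫_{κ⁺}(α)` is stationary in `𝒫_{κ⁺}(α)` iff
`{i < κ⁺ : x_i ∈ s}` is stationary in `κ⁺`.  Consequently, any forcing preserving
stationary subsets of `κ⁺` preserves stationary subsets of `𝒫_{κ⁺}(α)`. -/

theorem stationary_in_P_iff_stationary_in_kappa_plus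
    (κ lam : Cardinal.{0}) (hκ : Cardinal.aleph0 ≤ κ) (hκlam : κ ≤ lam)
    (hreg : (Order.succ κ).IsRegular)
    (α : Ordinal.{0}) (hα : α.cof = Order.succ κ)
    (x : KPT κ → Set Ordinal.{0})
    (hsub : ∀ i, x i ⊆ Set.Iio α)
    (hsmall : ∀ i, #(x i) < Cardinal.lift.{1,0} (Order.succ κ))
    (hmono : ∀ i j : KPT κ, i ≤ j → x i ⊆ x j)
    (hcont : ∀ i : KPT κ, (∃ j, j < i) → (∀ j, j < i → ∃ k, j < k ∧ k < i) →
      x i = ⋃ j : {j : KPT κ // j < i}, x j.1)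
    (hunion : ⋃ i, x i = Set.Iio α) :
    ∀ s : Set (Set Ordinal.{0}), (∀ y ∈ s, SmallSub (Order.succ κ) α y) →
      ((StationaryInP (Order.succ κ) α s ↔ StatT {i : KPT κ | x i ∈ s}) ∧
        ∀ (P : Type) (ip : Preorder P),
          (∀ S : Set (KPT κ), StatT S → @Forces P ip (StatT S)) →
          (StationaryInP (Order.succ κ) α s →
            @Forces P ip (StationaryInP (Order.succ κ) α s))) := by
  intro s hs
  have hℵ : Cardinal.aleph0 < Order.succ κ := hκ.trans_lt (Order.lt_succ κ)
  -- every small subset of α is covered by some x i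
  have cover : ∀ y : Set Ordinal.{0}, SmallSub (Order.succ κ) α y → ∃ i, y ⊆ x i := by
    intro y hy
    have hchoice : ∀ a : y, ∃ i, (a : Ordinal) ∈ x i := by
      intro a
      have : (a : Ordinal) ∈ ⋃ i, x i := by rw [hunion]; exact hy.1 a.2
      simpa using this
    choose g hg using hchoice
    have hr : #(range g) < Order.succ κ := by
      have h1 := Cardinal.mk_range_le_lift (f := g)
      rw [Cardinal.lift_id'] at h1
      exact Cardinal.lift_lt.1 (h1.trans_lt hy.2)
    obtain ⟨b, hb⟩ := kpt_bdd hreg _ hr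
    exact ⟨b, fun a ha => hmono _ _ (hb _ ⟨⟨a, ha⟩, rfl⟩) (hg ⟨a, ha⟩)⟩
  -- continuity at unattained suprema
  have contAt : ∀ (b : KPT κ) (I : Set (KPT κ)), I.Nonempty → (∀ i ∈ I, i < b) →
      (∀ j, j < b → ∃ i ∈ I, j < i) → x b = ⋃ i ∈ I, x i := by
    rintro b I ⟨i0, hi0⟩ hlt hcof
    have h1 : x b = ⋃ j : {j : KPT κ // j < b}, x j.1 :=
      hcont b ⟨i0, hlt _ hi0⟩ (fun j hj => by
        obtain ⟨k, hkI, hjk⟩ := hcof j hj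
        exact ⟨k, hjk, hlt _ hkI⟩)
    rw [h1]
    apply subset_antisymm
    · refine iUnion_subset fun j => ?_
      obtain ⟨i, hiI, hji⟩ := hcof j.1 j.2
      exact (hmono _ _ hji.le).trans (subset_biUnion_of_mem hiI)
    · refine iUnion₂_subset fun i hi => ?_
      exact subset_iUnion_of_subset ⟨i, hlt _ hi⟩ subset_rfl
  refine ⟨?_, fun P ip _ hstat G _ => hstat⟩
  constructor
  · -- forward
    intro hst C hC
    obtain ⟨hCub, hCcl⟩ := hC
    have hclub : ClubInP (Order.succ κ) α (x '' C) := by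
      refine ⟨?_, ?_, ?_⟩
      · rintro y ⟨i, -, rfl⟩; exact ⟨hsub i, hsmall i⟩
      · intro y hy
        obtain ⟨i, hi⟩ := cover y hy
        obtain ⟨c, hcC, hic⟩ := hCub i
        exact ⟨x c, ⟨c, hcC, rfl⟩, hi.trans (hmono _ _ hic)⟩
      · intro D hD hDne hDch hDcard
        have : Nonempty D := hDne.to_subtype
        have hch : ∀ y : D, ∃ i, i ∈ C ∧ x i = y.1 := fun y => hD y.2
        choose c hcC hcx using hch
        have hrsub : range c ⊆ C := by rintro _ ⟨y, rfl⟩; exact hcC y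
        have hrange : #(range c) < Order.succ κ := by
          have h1 := Cardinal.mk_range_le_lift (f := c)
          rw [Cardinal.lift_id'] at h1
          exact Cardinal.lift_lt.1 (h1.trans_lt hDcard)
        have hrne : (range c).Nonempty := range_nonempty _
        obtain ⟨b, hb, hcases⟩ := kpt_sup hreg _ hrne hrange
        by_cases hbI : b ∈ range c
        · have hmax : ⋃₀ D = x b := by
            apply subset_antisymm
            · apply sUnion_subset; intro y hy
              have hxy : x (c ⟨y, hy⟩) = y := hcx ⟨y, hy⟩
              rw [← hxy]
              exact hmono _ _ (hb _ (mem_range_self _))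
            · obtain ⟨y, hy⟩ := hbI
              rw [← hy, hcx y]
              exact subset_sUnion_of_mem y.2
          rw [hmax]
          exact ⟨b, hrsub hbI, rfl⟩
        · have hblt : ∀ i ∈ range c, i < b :=
            fun i hi => (hb i hi).lt_of_ne (by rintro rfl; exact hbI hi)
          have hcof := hcases.resolve_left hbI
          have hbC : b ∈ C := by
            obtain ⟨i0, hi0⟩ := hrne
            refine hCcl b ⟨i0, hblt _ hi0⟩ fun j hj => ?_
            obtain ⟨i, hiI, hji⟩ := hcof j hj
            exact ⟨i, hrsub hiI, hji, hblt _ hiI⟩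
          have hxb : x b = ⋃ i ∈ range c, x i := contAt b _ hrne hblt hcof
          have hDI : ⋃₀ D = x b := by
            rw [hxb]
            apply subset_antisymm
            · apply sUnion_subset; intro y hy
              have hxy : x (c ⟨y, hy⟩) = y := hcx ⟨y, hy⟩
              rw [← hxy]
              exact subset_biUnion_of_mem (mem_range_self _)
            · refine iUnion₂_subset ?_
              rintro _ ⟨y, rfl⟩
              rw [hcx y]
              exact subset_sUnion_of_mem y.2
          rw [hDI]
          exact ⟨b, hbC, rfl⟩
    obtain ⟨y, hys, i, hiC, rfl⟩ := hst.2 _ hclub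
    exact ⟨i, hys, hiC⟩
  · -- backward
    intro hT
    refine ⟨hs, fun C hC => ?_⟩
    obtain ⟨hCsm, hCub, hCcl⟩ := hC
    have step : ∀ i : KPT κ, ∃ (j : KPT κ) (y : Set Ordinal.{0}),
        i < j ∧ y ∈ C ∧ x i ⊆ y ∧ y ⊆ x j := by
      intro i
      obtain ⟨y, hyC, hxy⟩ := hCub (x i) ⟨hsub i, hsmall i⟩
      obtain ⟨j, hj⟩ := cover y (hCsm y hyC)
      obtain ⟨b, hb⟩ := kpt_bdd hreg {i, j}
        (((Set.toFinite _).lt_aleph0).trans hℵ)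
      obtain ⟨b', hbb'⟩ := kpt_no_max hreg b
      exact ⟨b', y, (hb i (by simp)).trans_lt hbb', hyC, hxy,
        hj.trans (hmono _ _ ((hb j (by simp)).trans hbb'.le))⟩
    choose F Y hlt hYC hxY hYx using step
    have hEclub : ClubT {i : KPT κ | x i ∈ C} := by
      constructor
      · intro i0
        set g : ℕ → KPT κ := fun n => F^[n] i0 with hgdef
        have hgsucc : ∀ n, g (n + 1) = F (g n) := fun n => Function.iterate_succ_apply' F n i0
        have hgmono : StrictMono g := strictMono_nat_of_lt_succ fun n => by
          rw [hgsucc]; exact hlt (g n)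
        have hrange : #(range g) < Order.succ κ :=
          (Cardinal.mk_range_le.trans_eq Cardinal.mk_nat).trans_lt hℵ
        obtain ⟨b, hb, hcases⟩ := kpt_sup hreg _ (range_nonempty g) hrange
        have hbnot : b ∉ range g := by
          rintro ⟨n, rfl⟩
          exact absurd (hb _ (mem_range_self (n + 1))) (not_le.2 (hgmono (Nat.lt_succ_self n)))
        have hblt : ∀ i ∈ range g, i < b :=
          fun i hi => (hb i hi).lt_of_ne (by rintro rfl; exact hbnot hi)
        have hcof := hcases.resolve_left hbnot
        have hxb : x b = ⋃ i ∈ range g, x i := contAt b _ (range_nonempty g) hblt hcof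
        have hxb2 : x b = ⋃ n, Y (g n) := by
          rw [hxb, biUnion_range]
          apply subset_antisymm
          · exact iUnion_subset fun n => (hxY (g n)).trans (subset_iUnion (fun n => Y (g n)) n)
          · refine iUnion_subset fun n => ?_
            refine ((hgsucc n ▸ hYx (g n)) : Y (g n) ⊆ x (g (n+1))).trans ?_
            exact subset_iUnion (fun n => x (g n)) (n + 1)
        have hmonoY : ∀ m n, m ≤ n → Y (g m) ⊆ Y (g n) := by
          intro m n hmn
          rcases eq_or_lt_of_le hmn with rfl | hmn
          · exact subset_rfl
          · refine ((hgsucc m ▸ hYx (g m)) : Y (g m) ⊆ x (g (m+1))).trans ?_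
            exact (hmono _ _ (hgmono.monotone hmn)).trans (hxY (g n))
        have hch : IsChain (· ⊆ ·) (range fun n => Y (g n)) := by
          rintro _ ⟨m, rfl⟩ _ ⟨n, rfl⟩ -
          rcases le_total m n with h | h
          exacts [Or.inl (hmonoY m n h), Or.inr (hmonoY n m h)]
        have hcard : #(range fun n => Y (g n)) < Cardinal.lift.{1,0} (Order.succ κ) := by
          have h1 := Cardinal.mk_range_le_lift (f := fun n => Y (g n))
          rw [Cardinal.lift_id'] at h1
          refine h1.trans_lt ?_
          rw [Cardinal.mk_nat]
          exact Cardinal.lift_lt.2 hℵ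
        have hmem := hCcl _ (by rintro _ ⟨n, rfl⟩; exact hYC _)
          ⟨_, mem_range_self 0⟩ hch hcard
        rw [sUnion_range, ← hxb2] at hmem
        refine ⟨b, hmem, ?_⟩
        have : g 0 = i0 := rfl
        exact this ▸ (hb (g 0) (mem_range_self 0))
      · intro i hex hcf
        set I : Set (KPT κ) := {c | x c ∈ C ∧ c < i} with hI
        have hne : I.Nonempty := by
          obtain ⟨j, hj⟩ := hex
          obtain ⟨c, hc, -, hci⟩ := hcf j hj
          exact ⟨c, hc, hci⟩
        have hblt : ∀ c ∈ I, c < i := fun c hc => hc.2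
        have hcof : ∀ j, j < i → ∃ c ∈ I, j < c := fun j hj => by
          obtain ⟨c, hcE, hjc, hci⟩ := hcf j hj
          exact ⟨c, ⟨hcE, hci⟩, hjc⟩
        have hxi : x i = ⋃ c ∈ I, x c := contAt i I hne hblt hcof
        have hcard : #(x '' I) < Cardinal.lift.{1,0} (Order.succ κ) := by
          have h1 := Cardinal.mk_image_le_lift (f := x) (s := I)
          rw [Cardinal.lift_id'] at h1
          refine h1.trans_lt (Cardinal.lift_lt.2 ?_)
          exact (Cardinal.mk_le_mk_of_subset fun c hc => hc.2).trans_lt (kpt_card_Iio i)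
        have hch : IsChain (· ⊆ ·) (x '' I) := by
          rintro _ ⟨m, -, rfl⟩ _ ⟨n, -, rfl⟩ -
          rcases le_total m n with h | h
          exacts [Or.inl (hmono _ _ h), Or.inr (hmono _ _ h)]
        have hmem := hCcl _ (by rintro _ ⟨c, hc, rfl⟩; exact hc.1) (hne.image x) hch hcard
        rw [sUnion_image, ← hxi] at hmem
        exact hmem
    obtain ⟨i, hi1, hi2⟩ := hT _ hEclub
    exact ⟨x i, hi1, hi2⟩

end Paper
end
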